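/- arXiv:0907.2515 — 2 statements merged into one kernel-verified Lean document; each statement's English description precedes it below -/
import Mathlib

section
/- For every s ∈ ℂ with Re(s) > 1: 𝒞(6,1;s) = (3/2)·𝒞(4,1;s) − (1/4)·𝒞(0,1;s); that is, Σ' cos⁶(θ_{p₁,p₂})/(p₁²+p₂²)^s = (3/2)·Σ' cos⁴(θ_{p₁,p₂})/(p₁²+p₂²)^s − (1/4)·Σ' 1/(p₁²+p₂²)^s. -/
/-- The angle `θ_{p₁,p₂} = arg(p₁ + i p₂)` of a lattice point. -/
noncomputable def latticeAngle (p : ℤ × ℤ) : ℝ :=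
  Complex.arg ((p.1 : ℂ) + (p.2 : ℂ) * Complex.I)

/-- The angular lattice sum `𝒞(n,m;s)`. -/
noncomputable def latC (n m : ℕ) (s : ℂ) : ℂ :=
  ∑' p : {p : ℤ × ℤ // p ≠ 0},
    ((Real.cos ((m : ℝ) * latticeAngle p.1) : ℂ)) ^ n /
      (((p.1.1 : ℂ)) ^ 2 + ((p.1.2 : ℂ)) ^ 2) ^ s

/-- The angular lattice sum `𝒮(n,m;s)`. -/
noncomputable def latS (n m : ℕ) (s : ℂ) : ℂ :=
  ∑' p : {p : ℤ × ℤ // p ≠ 0},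
    ((Real.sin ((m : ℝ) * latticeAngle p.1) : ℂ)) ^ n /
      (((p.1.1 : ℂ)) ^ 2 + ((p.1.2 : ℂ)) ^ 2) ^ s

/-! The swap `(p₁, p₂) ↦ (p₂, p₁)` permutes `ℤ² \ {0}`, fixes `p₁² + p₂²` and turns `cos θ` into
`sin θ`. Hence summing `cos⁶ θ / |p|^{2s}` is the same as summing half of
`(cos⁶ θ + sin⁶ θ) / |p|^{2s}`, and for `c² + d² = 1` one has `2 (c⁶ + d⁶) = 3 (c⁴ + d⁴) - 1`.
All series converge absolutely for `Re s > 1` by comparison with `∑ ‖p‖^{-2 Re s}`. -/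

lemma summable_norm_rpow_int_prod {k : ℝ} (hk : 2 < k) :
    Summable fun p : ℤ × ℤ ↦ ‖p‖ ^ (-k) := by
  rw [← (finTwoArrowEquiv ℤ).summable_iff]
  simpa [Function.comp_def, EisensteinSeries.norm_eq_max_natAbs, Prod.norm_def,
    Int.norm_eq_abs] using EisensteinSeries.summable_one_div_norm_rpow hk

lemma norm_sq_le_sq_add_sq (p : ℤ × ℤ) : ‖p‖ ^ 2 ≤ (p.1 : ℝ) ^ 2 + (p.2 : ℝ) ^ 2 := by
  rcases le_total |(p.1 : ℝ)| |(p.2 : ℝ)| with h | h <;>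
    simp [Prod.norm_def, Int.norm_eq_abs, h, sq_abs, sq_nonneg]

lemma summable_div_sq_add_sq_cpow {s : ℂ} (hs : 1 < s.re) {f : {p : ℤ × ℤ // p ≠ 0} → ℂ}
    {C : ℝ} (hf : ∀ p, ‖f p‖ ≤ C) :
    Summable fun p : {p : ℤ × ℤ // p ≠ 0} ↦ f p / ((p.1.1 : ℂ) ^ 2 + (p.1.2 : ℂ) ^ 2) ^ s := by
  refine .of_norm_bounded
    (((summable_norm_rpow_int_prod (k := 2 * s.re) (by linarith)).subtype _).mul_left C) ?_
  rintro ⟨p, hp⟩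
  have hnorm_sq_pos : 0 < ‖p‖ ^ 2 := by positivity
  have hsq : ((p.1 : ℂ) ^ 2 + (p.2 : ℂ) ^ 2) = (((p.1 : ℝ) ^ 2 + (p.2 : ℝ) ^ 2 : ℝ) : ℂ) := by
    push_cast; rfl
  have hpos := hnorm_sq_pos.trans_le (norm_sq_le_sq_add_sq p)
  rw [hsq, norm_div, Complex.norm_cpow_eq_rpow_re_of_pos hpos, div_eq_mul_inv,
    ← Real.rpow_neg hpos.le]
  gcongr
  · exact (norm_nonneg _).trans (hf ⟨p, hp⟩)
  · exact hf _
  · calc ((p.1 : ℝ) ^ 2 + (p.2 : ℝ) ^ 2) ^ (-s.re) ≤ (‖p‖ ^ 2) ^ (-s.re) :=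
          Real.rpow_le_rpow_of_nonpos hnorm_sq_pos (norm_sq_le_sq_add_sq p) (by linarith)
      _ = ‖p‖ ^ (-(2 * s.re)) := by
          rw [← Real.rpow_natCast, ← Real.rpow_mul (norm_nonneg _)]; ring_nf

lemma cos_latticeAngle_swap {p : ℤ × ℤ} (hp : p ≠ 0) :
    Real.cos (latticeAngle p.swap) = Real.sin (latticeAngle p) := by
  have hz : (p.2 : ℂ) + (p.1 : ℂ) * Complex.I ≠ 0 := by
    simpa [Complex.ext_iff, Prod.ext_iff, and_comm] using hp
  rw [latticeAngle, latticeAngle, Prod.fst_swap, Prod.snd_swap, Complex.cos_arg hz,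
    Complex.sin_arg]
  simp [Complex.norm_def, Complex.normSq_apply, add_comm]

lemma two_mul_pow_six_add_pow_six {R : Type*} [CommRing R] {c d : R} (h : c ^ 2 + d ^ 2 = 1) :
    2 * (c ^ 6 + d ^ 6) = 3 * (c ^ 4 + d ^ 4) - 1 := by
  linear_combination (2 * (c ^ 2 + d ^ 2) ^ 2 - (c ^ 2 + d ^ 2) - 1 - 6 * c ^ 2 * d ^ 2) * h

lemma HasSum.add_comp_equiv {α β : Type*} [AddCommMonoid α] [TopologicalSpace α]
    [ContinuousAdd α] {f : β → α} {a : α} (hf : HasSum f a) (e : β ≃ β) :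
    HasSum (fun x ↦ f x + f (e x)) (a + a) :=
  hf.add (e.hasSum_iff.mpr hf)

def swapNeZero : {p : ℤ × ℤ // p ≠ 0} ≃ {p : ℤ × ℤ // p ≠ 0} :=
  (Equiv.prodComm ℤ ℤ).subtypeEquiv fun p ↦ by simp [Prod.ext_iff, and_comm]

noncomputable def latCTerm (n : ℕ) (s : ℂ) (p : ℤ × ℤ) : ℂ :=
  (Real.cos (latticeAngle p) : ℂ) ^ n / ((p.1 : ℂ) ^ 2 + (p.2 : ℂ) ^ 2) ^ s

lemma latC_one_eq_tsum (n : ℕ) (s : ℂ) :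
    latC n 1 s = ∑' p : {p : ℤ × ℤ // p ≠ 0}, latCTerm n s p := by
  simp [latC, latCTerm]

lemma latCTerm_six_add_swap (s : ℂ) {p : ℤ × ℤ} (hp : p ≠ 0) :
    latCTerm 6 s p + latCTerm 6 s p.swap =
      3 / 2 * (latCTerm 4 s p + latCTerm 4 s p.swap) -
        1 / 4 * (latCTerm 0 s p + latCTerm 0 s p.swap) := by
  simp only [latCTerm, Prod.fst_swap, Prod.snd_swap, add_comm ((p.2 : ℂ) ^ 2)]
  set c : ℂ := (Real.cos (latticeAngle p) : ℂ)
  set d : ℂ := (Real.cos (latticeAngle p.swap) : ℂ)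
  set w := ((p.1 : ℂ) ^ 2 + (p.2 : ℂ) ^ 2) ^ s
  have hcd : c ^ 2 + d ^ 2 = 1 := by
    simp only [c, d, cos_latticeAngle_swap hp]
    exact_mod_cast Real.cos_sq_add_sin_sq _
  linear_combination two_mul_pow_six_add_pow_six hcd / (2 * w)

lemma summable_latCTerm (n : ℕ) {s : ℂ} (hs : 1 < s.re) :
    Summable fun p : {p : ℤ × ℤ // p ≠ 0} ↦ latCTerm n s p :=
  summable_div_sq_add_sq_cpow hs (C := 1) fun p ↦ by
    rw [norm_pow, Complex.norm_real, Real.norm_eq_abs]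
    exact pow_le_one₀ (abs_nonneg _) (Real.abs_cos_le_one _)

/-- For `Re s > 1`, `𝒞(6,1;s) = (3/2) 𝒞(4,1;s) - (1/4) 𝒞(0,1;s)`. -/
theorem latC_six_one_eq (s : ℂ) (hs : 1 < s.re) :
    latC 6 1 s = (3 / 2) * latC 4 1 s - (1 / 4) * latC 0 1 s := by
  have hasSum (n : ℕ) : HasSum (fun p : {p : ℤ × ℤ // p ≠ 0} ↦ latCTerm n s p) (latC n 1 s) :=
    latC_one_eq_tsum n s ▸ (summable_latCTerm n hs).hasSum
  have h := ((hasSum 6).add_comp_equiv swapNeZero).unique <|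
    ((((hasSum 4).add_comp_equiv swapNeZero).mul_left (3 / 2)).sub
      (((hasSum 0).add_comp_equiv swapNeZero).mul_left (1 / 4))).congr_fun
      fun p ↦ latCTerm_six_add_swap s p.2
  linear_combination h / 2
end

section
/- For every s ∈ ℂ with Re(s) > 1: 𝒞(2,4;s) = 64·𝒞(8,1;s) − 112·𝒞(4,1;s) + 25·𝒞(0,1;s) and 𝒮(2,4;s) = −64·𝒞(8,1;s) + 112·𝒞(4,1;s) − 24·𝒞(0,1;s). -/
lemma latticeAngle_eq_arg (p : ℤ × ℤ) :
    latticeAngle p = Complex.arg ((p.1 : ℝ) + (p.2 : ℝ) * Complex.I) := by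
  simp [latticeAngle]

lemma sq_norm_finTwoArrowEquiv_symm_le (p : ℤ × ℤ) :
    ‖(finTwoArrowEquiv ℤ).symm p‖ ^ 2 ≤ (p.1 : ℝ) ^ 2 + (p.2 : ℝ) ^ 2 := by
  rw [EisensteinSeries.norm_eq_max_natAbs]
  simp only [finTwoArrowEquiv_symm_apply, Matrix.cons_val_zero, Matrix.cons_val_one,
    Nat.cast_max, Nat.cast_natAbs, Int.cast_abs]
  rcases le_total |(p.1 : ℝ)| |(p.2 : ℝ)| with h | h
  · rw [max_eq_right h, sq_abs]; nlinarith
  · rw [max_eq_left h, sq_abs]; nlinarith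

lemma sq_add_sq_pos_of_ne_zero {p : ℤ × ℤ} (hp : p ≠ 0) :
    0 < (p.1 : ℝ) ^ 2 + (p.2 : ℝ) ^ 2 := by
  obtain h | h : (p.1 : ℝ) ≠ 0 ∨ (p.2 : ℝ) ≠ 0 := by
    by_contra! h
    exact hp (Prod.ext (by exact_mod_cast h.1) (by exact_mod_cast h.2))
  all_goals positivity

lemma summable_sq_add_sq_rpow_neg {σ : ℝ} (hσ : 1 < σ) :
    Summable fun p : {p : ℤ × ℤ // p ≠ 0} =>
      ((p.1.1 : ℝ) ^ 2 + (p.1.2 : ℝ) ^ 2) ^ (-σ) := by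
  have hmax : Summable fun p : ℤ × ℤ => ‖(finTwoArrowEquiv ℤ).symm p‖ ^ (-(2 * σ)) :=
    (EisensteinSeries.summable_one_div_norm_rpow (by linarith)).comp_injective
      (finTwoArrowEquiv ℤ).symm.injective
  refine (hmax.subtype _).of_nonneg_of_le (fun p => by positivity) fun p => ?_
  have hpos := sq_add_sq_pos_of_ne_zero p.2
  have hN : 0 < ‖(finTwoArrowEquiv ℤ).symm p.1‖ := by
    simpa [Prod.ext_iff] using p.2
  calc ((p.1.1 : ℝ) ^ 2 + (p.1.2 : ℝ) ^ 2) ^ (-σ)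
      ≤ (‖(finTwoArrowEquiv ℤ).symm p.1‖ ^ 2) ^ (-σ) :=
        Real.rpow_le_rpow_of_nonpos (by positivity) (sq_norm_finTwoArrowEquiv_symm_le p.1)
          (by linarith)
    _ = ‖(finTwoArrowEquiv ℤ).symm p.1‖ ^ (-(2 * σ)) := by
        rw [← Real.rpow_natCast_mul hN.le]; norm_num

noncomputable def angularTerm (f : ℝ → ℂ) (s : ℂ) (p : {p : ℤ × ℤ // p ≠ 0}) : ℂ :=
  f (latticeAngle p) / ((p.1.1 : ℂ) ^ 2 + (p.1.2 : ℂ) ^ 2) ^ s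

lemma summable_angularTerm {f : ℝ → ℂ} {C : ℝ} (hf : ∀ θ, ‖f θ‖ ≤ C) {s : ℂ} (hs : 1 < s.re) :
    Summable (angularTerm f s) := by
  refine .of_norm_bounded ((summable_sq_add_sq_rpow_neg hs).mul_left C) fun p => ?_
  have hpos := sq_add_sq_pos_of_ne_zero p.2
  have hden : (p.1.1 : ℂ) ^ 2 + (p.1.2 : ℂ) ^ 2 =
      (((p.1.1 : ℝ) ^ 2 + (p.1.2 : ℝ) ^ 2 : ℝ) : ℂ) := by
    push_cast; rfl
  rw [angularTerm, norm_div, hden, Complex.norm_cpow_eq_rpow_re_of_pos hpos,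
    Real.rpow_neg hpos.le, div_eq_mul_inv]
  gcongr
  exact hf _

def swapNonzero : {p : ℤ × ℤ // p ≠ 0} ≃ {p : ℤ × ℤ // p ≠ 0} :=
  (Equiv.prodComm ℤ ℤ).subtypeEquiv fun p => by simp [Prod.ext_iff, and_comm]

lemma hasSum_angularTerm_comp_cos_iff_comp_sin (g : ℝ → ℂ) (s a : ℂ) :
    HasSum (angularTerm (g ∘ Real.cos) s) a ↔ HasSum (angularTerm (g ∘ Real.sin) s) a := by
  suffices angularTerm (g ∘ Real.cos) s ∘ swapNonzero = angularTerm (g ∘ Real.sin) s by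
    rw [← swapNonzero.hasSum_iff, this]
  funext p
  simp only [Function.comp_apply, angularTerm, swapNonzero, Equiv.subtypeEquiv_apply,
    Equiv.prodComm_apply, Prod.fst_swap, Prod.snd_swap, cos_latticeAngle_swap p.2, add_comm]

lemma hasSum_angularTerm_cos_pow {s : ℂ} (hs : 1 < s.re) (n : ℕ) :
    HasSum (angularTerm (fun θ => (Real.cos θ : ℂ) ^ n) s) (latC n 1 s) := by
  have hbound (θ : ℝ) : ‖(Real.cos θ : ℂ) ^ n‖ ≤ 1 := by
    rw [norm_pow, Complex.norm_real, Real.norm_eq_abs]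
    exact pow_le_one₀ (abs_nonneg _) (Real.abs_cos_le_one θ)
  simpa [latC, angularTerm] using (summable_angularTerm hbound hs).hasSum

lemma hasSum_angularTerm_sin_pow {s : ℂ} (hs : 1 < s.re) (n : ℕ) :
    HasSum (angularTerm (fun θ => (Real.sin θ : ℂ) ^ n) s) (latC n 1 s) :=
  (hasSum_angularTerm_comp_cos_iff_comp_sin (fun x => (x : ℂ) ^ n) s _).mp
    (hasSum_angularTerm_cos_pow hs n)

lemma cos_four_mul_sq (θ : ℝ) :
    Real.cos (4 * θ) ^ 2 = 64 * Real.cos θ ^ 8 - 112 * Real.cos θ ^ 4 + 25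
      + (88 * Real.cos θ ^ 2 - 64 * Real.cos θ ^ 6)
      - (88 * Real.sin θ ^ 2 - 64 * Real.sin θ ^ 6) := by
  have h4 : Real.cos (4 * θ) = 2 * (2 * Real.cos θ ^ 2 - 1) ^ 2 - 1 := by
    rw [show 4 * θ = 2 * (2 * θ) by ring, Real.cos_two_mul, Real.cos_two_mul]
  rw [h4, show Real.sin θ ^ 6 = (Real.sin θ ^ 2) ^ 3 by ring, Real.sin_sq]
  ring

lemma hasSum_angularTerm_cos_four_mul_sq {s : ℂ} (hs : 1 < s.re) :
    HasSum (angularTerm (fun θ => (Real.cos (4 * θ) : ℂ) ^ 2) s)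
      (64 * latC 8 1 s - 112 * latC 4 1 s + 25 * latC 0 1 s) := by
  have hc (n : ℕ) := hasSum_angularTerm_cos_pow hs n
  have hsn (n : ℕ) := hasSum_angularTerm_sin_pow hs n
  have h := (((hc 8).mul_left 64).sub ((hc 4).mul_left 112)).add ((hc 0).mul_left 25) |>.add
    (((hc 2).mul_left 88).sub ((hc 6).mul_left 64)) |>.sub
    (((hsn 2).mul_left 88).sub ((hsn 6).mul_left 64))
  rw [add_sub_cancel_right] at h
  refine h.congr_fun fun p => ?_
  simp only [angularTerm]
  rw [← Complex.ofReal_pow, cos_four_mul_sq]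
  push_cast
  ring

/-- For `Re s > 1`, `𝒞(2,4;s) = 64 𝒞(8,1;s) - 112 𝒞(4,1;s) + 25 𝒞(0,1;s)` and
`𝒮(2,4;s) = -64 𝒞(8,1;s) + 112 𝒞(4,1;s) - 24 𝒞(0,1;s)`. -/
theorem latC_two_four_eq (s : ℂ) (hs : 1 < s.re) :
    latC 2 4 s = 64 * latC 8 1 s - 112 * latC 4 1 s + 25 * latC 0 1 s ∧
      latS 2 4 s = -64 * latC 8 1 s + 112 * latC 4 1 s - 24 * latC 0 1 s := by
  have hcos := hasSum_angularTerm_cos_four_mul_sq hs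
  have hsin : HasSum (angularTerm (fun θ => (Real.sin (4 * θ) : ℂ) ^ 2) s)
      (latC 0 1 s - (64 * latC 8 1 s - 112 * latC 4 1 s + 25 * latC 0 1 s)) := by
    refine ((hasSum_angularTerm_cos_pow hs 0).sub hcos).congr_fun fun p => ?_
    simp only [angularTerm]
    rw [← Complex.ofReal_pow, Real.sin_sq]
    push_cast
    ring
  have hS : latS 2 4 s =
      latC 0 1 s - (64 * latC 8 1 s - 112 * latC 4 1 s + 25 * latC 0 1 s) := by
    simpa [latS, angularTerm] using hsin.tsum_eq
  exact ⟨by simpa [latC, angularTerm] using hcos.tsum_eq, by rw [hS]; ring⟩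
end
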